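/- Let ε, ε'' ∈ {+1, −1} with (ε, ε'') ≠ (1, 1). Let μ ≥ 1, let L : ℂ^μ → ℂ^μ be a unitary linear map with L L̄ = L̄ L = ε·id (where L̄ = J₀ L J₀ and J₀ is entrywise complex conjugation), and let ℓ : ℂ^μ → ℂ^μ satisfy ℓ† = ℓ, ℓ² = id, and L ℓ̄ = ε'' ℓ L. Then μ is even and there exists an orthonormal basis {v_p}_{1 ≤ p ≤ μ} of eigenvectors of ℓ, say ℓ v_p = s_p v_p with s_p ∈ {+1,−1}, such that v_{2a} = L(v̄_{2a−1}), v_{2a−1} = ε L(v̄_{2a}), and s_{2a} = ε'' s_{2a−1} for every a = 1, …, μ/2. Moreover, when ε'' = −1 the basis can be chosen so that in addition s_{2a} = +1 and s_{2a−1} = −1 for all a. -/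

import Mathlib

/-- Entrywise complex conjugation `J₀` on `ℂ^μ`. -/
noncomputable def conjE {μ : ℕ} (v : EuclideanSpace ℂ (Fin μ)) : EuclideanSpace ℂ (Fin μ) :=
  WithLp.toLp 2 (fun p => star (v p))

/-- The normal-form property of an orthonormal basis `b` with signs `s` for the pair `(L, ℓ)`:
the basis consists of `±1`-eigenvectors of `ℓ` (eigenvalue `s p`), and (0-based indexing,
where the pair `(2a, 2a+1)` corresponds to the paper's `(2a-1, 2a)`)
`b (2a+1) = L (conj (b (2a)))`, `b (2a) = ε • L (conj (b (2a+1)))`, and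
`s (2a+1) = ε'' * s (2a)`. -/
def KOBasisProp (μ : ℕ) (ε ε'' : ℝ)
    (L ℓ : EuclideanSpace ℂ (Fin μ) →ₗ[ℂ] EuclideanSpace ℂ (Fin μ))
    (b : OrthonormalBasis (Fin μ) ℂ (EuclideanSpace ℂ (Fin μ)))
    (s : Fin μ → ℝ) : Prop :=
  (∀ p, s p = 1 ∨ s p = -1) ∧
  (∀ p, ℓ (b p) = (s p : ℂ) • b p) ∧
  ∀ (a : ℕ) (h : 2 * a + 1 < μ),
    b ⟨2 * a + 1, h⟩ = L (conjE (b ⟨2 * a, by omega⟩)) ∧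
    b ⟨2 * a, by omega⟩ = (ε : ℂ) • L (conjE (b ⟨2 * a + 1, h⟩)) ∧
    s ⟨2 * a + 1, h⟩ = ε'' * s ⟨2 * a, by omega⟩

/-!
Write `A := L ∘ J₀`: it is antiunitary, `A² = ε`, and `A ℓ = ε'' ℓ A`, so `A` sends an
eigenvector of `ℓ` with sign `t` to one with sign `ε'' t`. For a unit eigenvector `v` the pair
`v, A v` is orthonormal: if `ε'' = -1` the two signs differ and `ℓ` is self-adjoint, and if
`ε = -1` then `⟪A v, v⟫ = ⟪A v, A (A v)⟫ = -⟪A v, v⟫`. The plane spanned by `v, A v` is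
invariant under `ℓ` and `A`, hence so is its orthogonal complement, and induction on the
dimension of an invariant subspace splits the space into such planes. When `ε'' = -1` every
nonzero invariant subspace contains a `-1`-eigenvector (if `ℓ x = x` then `ℓ (A x) = -A x`),
which fixes the signs.
-/

open scoped ComplexInnerProductSpace InnerProductSpace
open Module Set Submodule

lemma Submodule.mapsTo_span_self {R M : Type*} [Semiring R] [AddCommMonoid M] [Module R M]
    {σ : R →+* R} [RingHomSurjective σ] {f : M →ₛₗ[σ] M} {s : Set M}
    (h : MapsTo f s (span R s)) :
    MapsTo f (span R s) (span R s) := by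
  simpa using mapsTo_span h

def pairFamily {ι α : Type*} (A : α → α) (v : ι → α) (p : ι × Fin 2) : α :=
  ![v p.1, A (v p.1)] p.2

section General

variable {𝕜 E : Type*} [RCLike 𝕜] [NormedAddCommGroup E] [InnerProductSpace 𝕜 E]

lemma LinearMap.IsSymmetric.mapsTo_orthogonal {T : E →ₗ[𝕜] E} (hT : T.IsSymmetric)
    {K : Submodule 𝕜 E} (hK : MapsTo T K K) : MapsTo T Kᗮ Kᗮ := fun x hx y hy => by
  rw [← hT]
  exact hx _ (hK hy)

lemma orthonormal_pairFamily_cons {A : E → E} {k : ℕ} {v₀ : E} {v : Fin k → E}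
    (h₀ : Orthonormal 𝕜 ![v₀, A v₀]) (h : Orthonormal 𝕜 (pairFamily A v))
    (h₀v : ∀ a i j, ⟪![v₀, A v₀] i, pairFamily A v (a, j)⟫_𝕜 = 0) :
    Orthonormal 𝕜 (pairFamily A (Fin.cons v₀ v : Fin (k + 1) → E)) := by
  classical
  rw [orthonormal_iff_ite] at h₀ h ⊢
  rintro ⟨a, i⟩ ⟨b, j⟩
  cases a using Fin.cases <;> cases b using Fin.cases
  · simpa [pairFamily] using h₀ i j
  · simpa [pairFamily, (Fin.succ_ne_zero _).symm] using h₀v _ i j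
  · simpa [pairFamily] using inner_eq_zero_symm.1 (h₀v _ j i)
  · simpa [pairFamily] using h (_, i) (_, j)

lemma LinearMap.IsSymmetric.inner_eq_zero_of_eigenvalue_neg {T : E →ₗ[𝕜] E}
    (hT : T.IsSymmetric) {t : ℝ} (ht : t ≠ 0) {v w : E} (hv : T v = (t : 𝕜) • v)
    (hw : T w = (-t : 𝕜) • w) : ⟪v, w⟫_𝕜 = 0 :=
  hT.orthogonalFamily_eigenspaces (self_eq_neg.not.2 (RCLike.ofReal_ne_zero.2 ht))
    ⟨v, Module.End.mem_eigenspace_iff.2 hv⟩ ⟨w, Module.End.mem_eigenspace_iff.2 hw⟩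

end General

lemma ofReal_mul_self_of_eq_one_or_neg_one {ε : ℝ} (hε : ε = 1 ∨ ε = -1) : (ε : ℂ) * ε = 1 := by
  rcases hε with rfl | rfl <;> norm_num

section Antiunitary

variable {E : Type*} [NormedAddCommGroup E] [InnerProductSpace ℂ E] {A : E →ₗ⋆[ℂ] E}
  {ℓ : E →ₗ[ℂ] E} {ε ε'' : ℝ}

lemma norm_map_of_inner_map_map (hA : ∀ x y, ⟪A x, A y⟫ = ⟪y, x⟫) (x : E) : ‖A x‖ = ‖x‖ := by
  have h := congrArg RCLike.re (hA x x)
  rw [← sq_eq_sq₀ (norm_nonneg _) (norm_nonneg _), @norm_sq_eq_re_inner ℂ, @norm_sq_eq_re_inner ℂ]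
  exact h

lemma inner_self_map_eq_zero_of_map_map_eq_neg (hA : ∀ x y, ⟪A x, A y⟫ = ⟪y, x⟫)
    (hAA : ∀ x, A (A x) = -x) (x : E) : ⟪x, A x⟫ = 0 := by
  have h := hA x (A x)
  rw [hAA, inner_neg_right] at h
  exact inner_eq_zero_symm.1 (by linear_combination -h / 2)

lemma mapsTo_orthogonal_of_antiunitary (hA : ∀ x y, ⟪A x, A y⟫ = ⟪y, x⟫)
    (hAA : ∀ x, A (A x) = (ε : ℂ) • x) (hε : ε = 1 ∨ ε = -1) {K : Submodule ℂ E}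
    (hK : MapsTo A K K) : MapsTo A Kᗮ Kᗮ := fun x hx y hy => by
  have hy' : y = (ε : ℂ) • A (A y) := by
    rw [hAA, smul_smul, ofReal_mul_self_of_eq_one_or_neg_one hε, one_smul]
  rw [hy', inner_smul_left, hA, inner_eq_zero_symm.1 (hx _ (hK hy)), mul_zero]

lemma map_eigenvector (hAℓ : ∀ x, A (ℓ x) = (ε'' : ℂ) • ℓ (A x)) (hε'' : ε'' = 1 ∨ ε'' = -1)
    {v : E} {t : ℝ} (hv : ℓ v = (t : ℂ) • v) : ℓ (A v) = ((ε'' * t : ℝ) : ℂ) • A v := by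
  have h := hAℓ v
  rw [hv, map_smulₛₗ, Complex.conj_ofReal] at h
  calc ℓ (A v) = ((ε'' : ℂ) * ε'') • ℓ (A v) := by
        rw [ofReal_mul_self_of_eq_one_or_neg_one hε'', one_smul]
    _ = ((ε'' * t : ℝ) : ℂ) • A v := by rw [mul_smul, ← h, smul_smul, Complex.ofReal_mul]

-- the sign `t = -1` is forced when `ε'' = -1`, so that the partner `A v` has sign `+1`
def IsSignedEigenvector (ℓ : E →ₗ[ℂ] E) (ε'' : ℝ) (v : E) (t : ℝ) : Prop :=
  (t = 1 ∨ t = -1) ∧ ℓ v = (t : ℂ) • v ∧ (ε'' = -1 → t = -1)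

lemma exists_unit_signedEigenvector (hA : ∀ x y, ⟪A x, A y⟫ = ⟪y, x⟫)
    (hAℓ : ∀ x, A (ℓ x) = (ε'' : ℂ) • ℓ (A x)) (hε'' : ε'' = 1 ∨ ε'' = -1)
    (hℓℓ : ∀ x, ℓ (ℓ x) = x) {V : Submodule ℂ E} (hV : V ≠ ⊥) (hℓV : MapsTo ℓ V V)
    (hAV : MapsTo A V V) : ∃ v ∈ V, ‖v‖ = 1 ∧ ∃ t, IsSignedEigenvector ℓ ε'' v t := by
  suffices ∃ u ∈ V, u ≠ 0 ∧ ∃ t, IsSignedEigenvector ℓ ε'' u t by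
    obtain ⟨u, huV, hu, t, ht, hℓu, ht''⟩ := this
    refine ⟨(‖u‖⁻¹ : ℂ) • u, V.smul_mem _ huV, norm_smul_inv_norm hu, t, ht, ?_, ht''⟩
    rw [map_smul, hℓu, smul_comm]
  obtain ⟨x, hxV, hx⟩ := V.ne_bot_iff.1 hV
  by_cases hℓx : ℓ x = x
  · by_cases hε''1 : ε'' = -1
    · refine ⟨A x, hAV hxV, ?_, -1, Or.inr rfl, ?_, fun _ => rfl⟩
      · rwa [← norm_ne_zero_iff, norm_map_of_inner_map_map hA, norm_ne_zero_iff]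
      · simpa [hε''1] using map_eigenvector hAℓ hε'' (t := 1) (by simpa using hℓx)
    · exact ⟨x, hxV, hx, 1, Or.inl rfl, by simpa using hℓx, fun h => absurd h hε''1⟩
  · refine ⟨x - ℓ x, V.sub_mem hxV (hℓV hxV), sub_ne_zero.2 (Ne.symm hℓx), -1, Or.inr rfl, ?_,
      fun _ => rfl⟩
    simp [hℓℓ]

lemma orthonormal_pair_map (hA : ∀ x y, ⟪A x, A y⟫ = ⟪y, x⟫)
    (hAA : ∀ x, A (A x) = (ε : ℂ) • x) (hAℓ : ∀ x, A (ℓ x) = (ε'' : ℂ) • ℓ (A x))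
    (hε : ε = 1 ∨ ε = -1) (hε'' : ε'' = 1 ∨ ε'' = -1) (hne : ¬(ε = 1 ∧ ε'' = 1))
    (hℓ : ℓ.IsSymmetric) {v : E} (hv : ‖v‖ = 1) {t : ℝ} (ht : t ≠ 0) (hℓv : ℓ v = (t : ℂ) • v) :
    Orthonormal ℂ ![v, A v] := by
  have hvAv : ⟪v, A v⟫ = 0 := by
    rcases hε'' with rfl | rfl
    · obtain rfl : ε = -1 := hε.resolve_left fun h => hne ⟨h, rfl⟩
      exact inner_self_map_eq_zero_of_map_map_eq_neg hA (by simpa using hAA) v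
    · exact hℓ.inner_eq_zero_of_eigenvalue_neg ht hℓv
        (by simpa using map_eigenvector hAℓ (Or.inr rfl) hℓv)
  simp [orthonormal_vecCons_iff, hv, norm_map_of_inner_map_map hA, hvAv]

lemma map_pairFamily (hAℓ : ∀ x, A (ℓ x) = (ε'' : ℂ) • ℓ (A x)) (hε'' : ε'' = 1 ∨ ε'' = -1)
    {ι : Type*} {v : ι → E} {t : ι → ℝ} (ht : ∀ a, ℓ (v a) = (t a : ℂ) • v a) (p : ι × Fin 2) :
    ℓ (pairFamily A v p) = ((pairFamily (ε'' * ·) t p : ℝ) : ℂ) • pairFamily A v p := by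
  obtain ⟨a, i⟩ := p
  fin_cases i
  exacts [ht a, map_eigenvector hAℓ hε'' (ht a)]

variable [FiniteDimensional ℂ E]

theorem exists_orthonormal_pairFamily (hA : ∀ x y, ⟪A x, A y⟫ = ⟪y, x⟫)
    (hAA : ∀ x, A (A x) = (ε : ℂ) • x) (hAℓ : ∀ x, A (ℓ x) = (ε'' : ℂ) • ℓ (A x))
    (hε : ε = 1 ∨ ε = -1) (hε'' : ε'' = 1 ∨ ε'' = -1) (hne : ¬(ε = 1 ∧ ε'' = 1))
    (hℓ : ℓ.IsSymmetric) (hℓℓ : ∀ x, ℓ (ℓ x) = x) (V : Submodule ℂ E) (hℓV : MapsTo ℓ V V)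
    (hAV : MapsTo A V V) :
    ∃ (k : ℕ) (v : Fin k → E) (t : Fin k → ℝ), 2 * k = finrank ℂ V ∧ (∀ a, v a ∈ V) ∧
      Orthonormal ℂ (pairFamily A v) ∧ ∀ a, IsSignedEigenvector ℓ ε'' (v a) (t a) := by
  induction hn : finrank ℂ V using Nat.strong_induction_on generalizing V with
  | _ n ih =>
  rcases eq_or_ne V ⊥ with rfl | hV
  · exact ⟨0, Fin.elim0, Fin.elim0, by simp [← hn], fun a => a.elim0, by simp, fun a => a.elim0⟩
  obtain ⟨v₀, hv₀V, hv₀, t₀, ht₀⟩ := exists_unit_signedEigenvector hA hAℓ hε'' hℓℓ hV hℓV hAV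
  have hon₀ : Orthonormal ℂ ![v₀, A v₀] :=
    orthonormal_pair_map hA hAA hAℓ hε hε'' hne hℓ hv₀
      (by rcases ht₀.1 with h | h <;> simp [h]) ht₀.2.1
  set W := span ℂ (range ![v₀, A v₀])
  have hWV : W ≤ V := span_le.2 (range_subset_iff.2 (Fin.forall_fin_two.2 ⟨hv₀V, hAV hv₀V⟩))
  have hW : finrank ℂ W = 2 := by simpa using finrank_span_eq_card hon₀.linearIndependent
  have hℓW : MapsTo ℓ W W := by
    refine mapsTo_span_self (mapsTo_range_iff.2 (Fin.forall_fin_two.2 ⟨?_, ?_⟩))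
    · show ℓ v₀ ∈ W
      rw [ht₀.2.1]
      exact W.smul_mem _ (subset_span (mem_range_self 0))
    · show ℓ (A v₀) ∈ W
      rw [map_eigenvector hAℓ hε'' ht₀.2.1]
      exact W.smul_mem _ (subset_span (mem_range_self 1))
  have hAW : MapsTo A W W := by
    refine mapsTo_span_self (mapsTo_range_iff.2 (Fin.forall_fin_two.2 ⟨?_, ?_⟩))
    · exact subset_span (mem_range_self 1)
    · show A (A v₀) ∈ W
      rw [hAA]
      exact W.smul_mem _ (subset_span (mem_range_self 0))
  have hV' := finrank_add_inf_finrank_orthogonal hWV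
  have hAV' : MapsTo A (Wᗮ ⊓ V) (Wᗮ ⊓ V) :=
    (mapsTo_orthogonal_of_antiunitary hA hAA hε hAW).inter_inter hAV
  obtain ⟨k, v, t, hk, hvV, hon, ht⟩ := ih _ (by omega) (Wᗮ ⊓ V)
    ((hℓ.mapsTo_orthogonal hℓW).inter_inter hℓV) hAV' rfl
  refine ⟨k + 1, Fin.cons v₀ v, Fin.cons t₀ t, by omega, Fin.cases hv₀V fun a => (hvV a).2,
    orthonormal_pairFamily_cons hon₀ hon fun a i j => ?_, Fin.cases ht₀ ht⟩
  have hperp : pairFamily A v (a, j) ∈ Wᗮ := by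
    fin_cases j
    exacts [(hvV a).1, (hAV' (hvV a)).1]
  exact hperp _ (subset_span (mem_range_self i))

theorem exists_orthonormalBasis_pairFamily (hA : ∀ x y, ⟪A x, A y⟫ = ⟪y, x⟫)
    (hAA : ∀ x, A (A x) = (ε : ℂ) • x) (hAℓ : ∀ x, A (ℓ x) = (ε'' : ℂ) • ℓ (A x))
    (hε : ε = 1 ∨ ε = -1) (hε'' : ε'' = 1 ∨ ε'' = -1) (hne : ¬(ε = 1 ∧ ε'' = 1))
    (hℓ : ℓ.IsSymmetric) (hℓℓ : ∀ x, ℓ (ℓ x) = x) :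
    ∃ (k : ℕ) (v : Fin k → E) (t : Fin k → ℝ) (b : OrthonormalBasis (Fin k × Fin 2) ℂ E),
      k * 2 = finrank ℂ E ∧ ⇑b = pairFamily A v ∧ ∀ a, IsSignedEigenvector ℓ ε'' (v a) (t a) := by
  obtain ⟨k, v, t, hk, -, hon, ht⟩ := exists_orthonormal_pairFamily hA hAA hAℓ hε hε'' hne hℓ hℓℓ
    ⊤ (fun _ _ => mem_top) (fun _ _ => mem_top)
  rw [finrank_top] at hk
  have hcard : Fintype.card (Fin k × Fin 2) = finrank ℂ E := by
    simp [← hk, mul_comm]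
  exact ⟨k, v, t, .mk hon (hon.linearIndependent.span_eq_top_of_card_eq_finrank' hcard).ge,
    by omega, OrthonormalBasis.coe_mk _ _, ht⟩

end Antiunitary

section Euclidean

variable {μ : ℕ}

lemma conjE_conjE (x : EuclideanSpace ℂ (Fin μ)) : conjE (conjE x) = x := by
  ext; simp [conjE]

lemma inner_conjE_conjE (x y : EuclideanSpace ℂ (Fin μ)) : ⟪conjE x, conjE y⟫ = ⟪y, x⟫ := by
  simp only [conjE, PiLp.inner_apply, RCLike.inner_apply, RCLike.star_def, Complex.conj_conj]
  exact Finset.sum_congr rfl fun _ _ => mul_comm _ _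

@[simps]
noncomputable def conjSemilinear (μ : ℕ) :
    EuclideanSpace ℂ (Fin μ) →ₗ⋆[ℂ] EuclideanSpace ℂ (Fin μ) where
  toFun := conjE
  map_add' x y := by ext; simp [conjE]
  map_smul' c x := by ext; simp [conjE]

lemma finProdFinEquiv_symm_two_mul {k : ℕ} (hk : k * 2 = μ) (a : ℕ) (h : 2 * a < μ) :
    (finProdFinEquiv.trans (finCongr hk)).symm ⟨2 * a, h⟩ = (⟨a, by omega⟩, 0) := by
  rw [Equiv.symm_apply_eq]
  ext
  simp

lemma finProdFinEquiv_symm_two_mul_add_one {k : ℕ} (hk : k * 2 = μ) (a : ℕ) (h : 2 * a + 1 < μ) :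
    (finProdFinEquiv.trans (finCongr hk)).symm ⟨2 * a + 1, h⟩ = (⟨a, by omega⟩, 1) := by
  rw [Equiv.symm_apply_eq]
  ext
  simp [add_comm]

lemma koBasisProp_reindex_pairFamily {k : ℕ} (hk : k * 2 = μ) {ε ε'' : ℝ}
    (hε : ε = 1 ∨ ε = -1) (hε'' : ε'' = 1 ∨ ε'' = -1)
    {L ℓ : EuclideanSpace ℂ (Fin μ) →ₗ[ℂ] EuclideanSpace ℂ (Fin μ)}
    (hAA : ∀ x, L (conjE (L (conjE x))) = (ε : ℂ) • x)
    (hAℓ : ∀ x, L (conjE (ℓ x)) = (ε'' : ℂ) • ℓ (L (conjE x)))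
    {v : Fin k → EuclideanSpace ℂ (Fin μ)} {t : Fin k → ℝ}
    {b : OrthonormalBasis (Fin k × Fin 2) ℂ (EuclideanSpace ℂ (Fin μ))}
    (hb : ⇑b = pairFamily (L.comp (conjSemilinear μ)) v)
    (ht : ∀ a, IsSignedEigenvector ℓ ε'' (v a) (t a)) :
    KOBasisProp μ ε ε'' L ℓ (b.reindex (finProdFinEquiv.trans (finCongr hk)))
      (pairFamily (ε'' * ·) t ∘ (finProdFinEquiv.trans (finCongr hk)).symm) := by
  refine ⟨fun p => ?_, fun p => ?_, fun a h => ?_⟩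
  · suffices ∀ q, pairFamily (ε'' * ·) t q = 1 ∨ pairFamily (ε'' * ·) t q = -1 from this _
    rintro ⟨a, i⟩
    fin_cases i
    · exact (ht a).1
    · rcases hε'' with rfl | rfl <;> rcases (ht a).1 with h | h <;> simp [pairFamily, h]
  · rw [OrthonormalBasis.reindex_apply, hb]
    exact map_pairFamily hAℓ hε'' (fun a => (ht a).2.1) _
  · simp only [OrthonormalBasis.reindex_apply, Function.comp_apply, hb,
      finProdFinEquiv_symm_two_mul, finProdFinEquiv_symm_two_mul_add_one, pairFamily,
      Matrix.cons_val_zero, Matrix.cons_val_one, LinearMap.comp_apply, conjSemilinear_apply,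
      true_and, and_true]
    rw [hAA, smul_smul, ofReal_mul_self_of_eq_one_or_neg_one hε, one_smul]

end Euclidean

/-- Normal form of the real structure and grading on a diagonal multiplicity
space in the even KO-dimensions 2, 4 and 6: with `(ε, ε'') ≠ (1,1)`, `L` unitary with
`L L̄ = L̄ L = ε·id`, `ℓ` a self-adjoint involution with `L ℓ̄ = ε'' ℓ L`, the dimension `μ`
is even and a basis in normal form exists; when `ε'' = -1` the signs can moreover be
normalized to `s(2a+1) = +1`, `s(2a) = -1`. -/
theorem statement7 (μ : ℕ) (ε ε'' : ℝ)
    (hε : ε = 1 ∨ ε = -1) (hε'' : ε'' = 1 ∨ ε'' = -1)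
    (hne : ¬(ε = 1 ∧ ε'' = 1))
    (L ℓ : EuclideanSpace ℂ (Fin μ) →ₗ[ℂ] EuclideanSpace ℂ (Fin μ))
    (hU1 : LinearMap.adjoint L ∘ₗ L = LinearMap.id)
    (h1 : ∀ v, L (conjE (L (conjE v))) = (ε : ℂ) • v)
    (hℓsa : LinearMap.adjoint ℓ = ℓ)
    (hℓsq : ℓ ∘ₗ ℓ = LinearMap.id)
    (hcomm : ∀ v, L (conjE (ℓ (conjE v))) = (ε'' : ℂ) • ℓ (L v)) :
    Even μ ∧
    (∃ (b : OrthonormalBasis (Fin μ) ℂ (EuclideanSpace ℂ (Fin μ))) (s : Fin μ → ℝ),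
      KOBasisProp μ ε ε'' L ℓ b s) ∧
    (ε'' = -1 →
      ∃ (b : OrthonormalBasis (Fin μ) ℂ (EuclideanSpace ℂ (Fin μ))) (s : Fin μ → ℝ),
        KOBasisProp μ ε ε'' L ℓ b s ∧
        ∀ (a : ℕ) (h : 2 * a + 1 < μ),
          s ⟨2 * a + 1, h⟩ = 1 ∧ s ⟨2 * a, by omega⟩ = -1) := by
  have hA : ∀ x y, ⟪L (conjE x), L (conjE y)⟫ = ⟪y, x⟫ := fun x y => by
    rw [← LinearMap.adjoint_inner_right, ← LinearMap.comp_apply, hU1, LinearMap.id_apply,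
      inner_conjE_conjE]
  have hAℓ : ∀ x, L (conjE (ℓ x)) = (ε'' : ℂ) • ℓ (L (conjE x)) := fun x => by
    simpa [conjE_conjE] using hcomm (conjE x)
  have hℓ : ℓ.IsSymmetric :=
    (LinearMap.isSymmetric_iff_isSelfAdjoint ℓ).2 (LinearMap.isSelfAdjoint_iff'.2 hℓsa)
  obtain ⟨k, v, t, b, hk, hb, ht⟩ := exists_orthonormalBasis_pairFamily
    (A := L.comp (conjSemilinear μ)) hA h1 hAℓ hε hε'' hne hℓ (LinearMap.congr_fun hℓsq)
  rw [finrank_euclideanSpace_fin] at hk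
  have hKO := koBasisProp_reindex_pairFamily hk hε hε'' h1 hAℓ hb ht
  refine ⟨⟨k, by omega⟩, ⟨_, _, hKO⟩, fun hε''₁ => ⟨_, _, hKO, fun a h => ?_⟩⟩
  simp only [Function.comp_apply, finProdFinEquiv_symm_two_mul,
    finProdFinEquiv_symm_two_mul_add_one, pairFamily, Matrix.cons_val_zero, Matrix.cons_val_one]
  rw [(ht _).2.2 hε''₁, hε''₁]
  norm_num
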